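/- arXiv:1407.6029 — 3 statements merged into one kernel-verified Lean document; each statement's English description precedes it below -/
import Mathlib

section
/- For a two-dimensional lattice with basis b_1, b_2 ∈ ℝ², the Lagrange–Gauss reduction procedure — repeatedly swapping (b_1, b_2) ← (b_2, -b_1) and replacing b_2 by b_2 - ⌊(b_1·b_2)/‖b_1‖²⌉ b_1 while |(b_1·b_2)/‖b_1‖²| > 1/2 — terminates, and upon termination b_1 is a shortest nonzero vector of the lattice. -/
/-!
Each step leaves the lattice `ℤ b₁ + ℤ b₂` unchanged, and the rounding makes the new pair
size-reduced: `|⟪a₁, a₂⟫| ≤ ‖a₁‖² / 2`. The second vector of a pair is the first vector of the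
next one, so if `‖a₁‖ > ‖a₂‖` held forever the first vectors would be lattice points of strictly
decreasing norm, impossible since a ball meets the lattice in a finite set. At a step with
`‖a₁‖ ≤ ‖a₂‖`, size reduction gives `‖p a₁ + q a₂‖² ≥ (p² - |p| |q| + q²) ‖a₁‖² ≥ ‖a₁‖²`
for integers `(p, q) ≠ (0, 0)`.
-/

open RealInnerProductSpace

/-- One loop iteration of the Lagrange–Gauss reduction:
`(b₁, b₂) ← (b₂, -b₁)` followed by `b₂ ← b₂ - ⌊(b₁·b₂)/‖b₁‖²⌉ b₁`. -/
noncomputable def gaussStep (p : EuclideanSpace ℝ (Fin 2) × EuclideanSpace ℝ (Fin 2)) :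
    EuclideanSpace ℝ (Fin 2) × EuclideanSpace ℝ (Fin 2) :=
  let c₁ := p.2
  let c₂ := -p.1
  (c₁, c₂ - (round (⟪c₁, c₂⟫ / ‖c₁‖ ^ 2) : ℤ) • c₁)

open Submodule Set

theorem Submodule.span_int_pair_neg_sub_zsmul {M : Type*} [AddCommGroup M] (x y : M) (r : ℤ) :
    span ℤ {y, -x - r • y} = span ℤ {x, y} := by
  apply le_antisymm <;> rw [span_le] <;> rintro v (rfl | rfl)
  · exact subset_span (by simp)
  · exact mem_span_pair.mpr ⟨-1, -r, by simp only [neg_smul, one_smul]; abel⟩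
  · exact mem_span_pair.mpr ⟨-r, -1, by simp only [neg_smul, one_smul]; abel⟩
  · exact subset_span (by simp)

theorem Int.one_le_sq_sub_abs_mul_abs_add_sq {p q : ℤ} (h : ¬(p = 0 ∧ q = 0)) :
    1 ≤ p ^ 2 - |p| * |q| + q ^ 2 := by
  have hpos : 0 < p ^ 2 - |p| * |q| + q ^ 2 := by
    rcases not_and_or.mp h with hp | hq
    · nlinarith [sq_pos_of_ne_zero hp, sq_nonneg (2 * |q| - |p|), sq_abs p, sq_abs q]
    · nlinarith [sq_pos_of_ne_zero hq, sq_nonneg (2 * |p| - |q|), sq_abs p, sq_abs q]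
  linarith

section InnerProductSpace

variable {F : Type*} [NormedAddCommGroup F] [InnerProductSpace ℝ F]

theorem abs_inner_sub_round_zsmul_le (x y : F) :
    |⟪y, x - round (⟪y, x⟫ / ‖y‖ ^ 2) • y⟫| ≤ ‖y‖ ^ 2 / 2 := by
  rcases eq_or_ne y 0 with rfl | hy
  · simp
  set μ := ⟪y, x⟫ / ‖y‖ ^ 2
  have hy2 : 0 < ‖y‖ ^ 2 := by positivity
  have hinner : ⟪y, x - round μ • y⟫ = (μ - round μ) * ‖y‖ ^ 2 := by
    rw [inner_sub_right, ← Int.cast_smul_eq_zsmul ℝ, real_inner_smul_right,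
      real_inner_self_eq_norm_sq, sub_mul, div_mul_cancel₀ _ hy2.ne']
  calc |⟪y, x - round μ • y⟫| = |μ - round μ| * ‖y‖ ^ 2 := by
        rw [hinner, abs_mul, abs_of_pos hy2]
    _ ≤ 1 / 2 * ‖y‖ ^ 2 := by gcongr; exact abs_sub_round μ
    _ = ‖y‖ ^ 2 / 2 := by ring

theorem sq_sub_abs_mul_abs_add_sq_mul_norm_sq_le {x y : F} (hred : |⟪x, y⟫| ≤ ‖x‖ ^ 2 / 2)
    (hxy : ‖x‖ ≤ ‖y‖) (s t : ℝ) :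
    (s ^ 2 - |s| * |t| + t ^ 2) * ‖x‖ ^ 2 ≤ ‖s • x + t • y‖ ^ 2 := by
  have hexpand :
      ‖s • x + t • y‖ ^ 2 = s ^ 2 * ‖x‖ ^ 2 + 2 * (s * t * ⟪x, y⟫) + t ^ 2 * ‖y‖ ^ 2 := by
    rw [norm_add_sq_real, norm_smul, norm_smul, real_inner_smul_left, real_inner_smul_right,
      Real.norm_eq_abs, Real.norm_eq_abs, mul_pow, mul_pow, sq_abs, sq_abs]
    ring
  have hcross : -(|s| * |t| * (‖x‖ ^ 2 / 2)) ≤ s * t * ⟪x, y⟫ := by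
    rw [_root_.neg_le]
    calc -(s * t * ⟪x, y⟫) ≤ |s| * |t| * |⟪x, y⟫| := by
          rw [← abs_mul, ← abs_mul]; exact neg_le_abs _
      _ ≤ |s| * |t| * (‖x‖ ^ 2 / 2) := by gcongr
  have hyx : t ^ 2 * ‖x‖ ^ 2 ≤ t ^ 2 * ‖y‖ ^ 2 := by gcongr
  rw [hexpand]
  linarith

theorem norm_le_norm_of_mem_span_int_pair {x y v : F} (hred : |⟪x, y⟫| ≤ ‖x‖ ^ 2 / 2)
    (hxy : ‖x‖ ≤ ‖y‖) (hv : v ∈ span ℤ {x, y}) (hv₀ : v ≠ 0) : ‖x‖ ≤ ‖v‖ := by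
  obtain ⟨p, q, rfl⟩ := mem_span_pair.mp hv
  have hpq : ¬(p = 0 ∧ q = 0) := by rintro ⟨rfl, rfl⟩; simp at hv₀
  have hquad : (1 : ℝ) ≤ (p : ℝ) ^ 2 - |(p : ℝ)| * |(q : ℝ)| + (q : ℝ) ^ 2 := by
    exact_mod_cast Int.one_le_sq_sub_abs_mul_abs_add_sq hpq
  have hsq : ‖x‖ ^ 2 ≤ ‖p • x + q • y‖ ^ 2 := by
    rw [← Int.cast_smul_eq_zsmul ℝ p x, ← Int.cast_smul_eq_zsmul ℝ q y]
    nlinarith [sq_sub_abs_mul_abs_add_sq_mul_norm_sq_le hred hxy p q, sq_nonneg ‖x‖]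
  exact pow_le_pow_iff_left₀ (norm_nonneg _) (norm_nonneg _) two_ne_zero |>.mp hsq

end InnerProductSpace

theorem exists_norm_le_norm_succ_of_mem_span_int {ι F : Type*} [Finite ι] [NormedAddCommGroup F]
    [NormedSpace ℝ F] [ProperSpace F] (b : Module.Basis ι ℝ F) {v : ℕ → F}
    (hv : ∀ n, v n ∈ span ℤ (range b)) : ∃ n, ‖v n‖ ≤ ‖v (n + 1)‖ := by
  by_contra! hdec
  have hanti : StrictAnti (‖v ·‖) := strictAnti_nat_of_succ_lt hdec
  have hinj : Function.Injective v := fun m n h => hanti.injective (congrArg norm h)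
  refine Set.infinite_of_injective_forall_mem (s := Metric.closedBall 0 ‖v 0‖ ∩ span ℤ (range b))
    hinj (fun n => ⟨?_, hv n⟩) (ZSpan.setFinite_inter b Metric.isBounded_closedBall)
  simpa using hanti.antitone (Nat.zero_le n)

theorem span_int_gaussStep (p : EuclideanSpace ℝ (Fin 2) × EuclideanSpace ℝ (Fin 2)) :
    span ℤ {(gaussStep p).1, (gaussStep p).2} = span ℤ {p.1, p.2} :=
  span_int_pair_neg_sub_zsmul p.1 p.2 _

theorem span_int_iterate_gaussStep (p : EuclideanSpace ℝ (Fin 2) × EuclideanSpace ℝ (Fin 2))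
    (n : ℕ) : span ℤ {(gaussStep^[n] p).1, (gaussStep^[n] p).2} = span ℤ {p.1, p.2} := by
  induction n with
  | zero => rfl
  | succ n ih => rw [Function.iterate_succ_apply', span_int_gaussStep, ih]

theorem abs_inner_gaussStep_le (p : EuclideanSpace ℝ (Fin 2) × EuclideanSpace ℝ (Fin 2)) :
    |⟪(gaussStep p).1, (gaussStep p).2⟫| ≤ ‖(gaussStep p).1‖ ^ 2 / 2 :=
  abs_inner_sub_round_zsmul_le (-p.1) p.2

/-- The Lagrange–Gauss procedure terminates: some iterate `(a₁, a₂)` satisfies the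
stopping condition `|(a₁·a₂)/‖a₁‖²| ≤ 1/2`, and then `a₁` is a shortest nonzero
vector of the lattice generated by `b₁, b₂`. -/
theorem gauss_reduction_terminates (b₁ b₂ : EuclideanSpace ℝ (Fin 2))
    (hind : LinearIndependent ℝ ![b₁, b₂]) :
    ∃ n : ℕ,
      |⟪(gaussStep^[n] (b₁, b₂)).1, (gaussStep^[n] (b₁, b₂)).2⟫| ≤
        ‖(gaussStep^[n] (b₁, b₂)).1‖ ^ 2 / 2 ∧
      ∀ p q : ℤ, ¬(p = 0 ∧ q = 0) →
        ‖(gaussStep^[n] (b₁, b₂)).1‖ ≤ ‖p • b₁ + q • b₂‖ := by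
  set a : ℕ → EuclideanSpace ℝ (Fin 2) × EuclideanSpace ℝ (Fin 2) :=
    fun n => gaussStep^[n] (b₁, b₂)
  have ha_succ (n : ℕ) : a (n + 1) = gaussStep (a n) := Function.iterate_succ_apply' ..
  let B := basisOfLinearIndependentOfCardEqFinrank hind (by simp)
  have hB : span ℤ (range B) = span ℤ {b₁, b₂} := by
    rw [coe_basisOfLinearIndependentOfCardEqFinrank, Matrix.range_cons_cons_empty]
  have hmem (n : ℕ) : (a (n + 1)).1 ∈ span ℤ (range B) := by
    rw [hB, ← span_int_iterate_gaussStep (b₁, b₂) (n + 1)]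
    exact subset_span (by simp [a])
  obtain ⟨n, hn⟩ := exists_norm_le_norm_succ_of_mem_span_int B hmem
  have hred : |⟪(a (n + 1)).1, (a (n + 1)).2⟫| ≤ ‖(a (n + 1)).1‖ ^ 2 / 2 := by
    rw [ha_succ]; exact abs_inner_gaussStep_le _
  have hle : ‖(a (n + 1)).1‖ ≤ ‖(a (n + 1)).2‖ := by rwa [ha_succ (n + 1)] at hn
  refine ⟨n + 1, hred, fun p q hpq => norm_le_norm_of_mem_span_int_pair hred hle ?_ ?_⟩
  · rw [span_int_iterate_gaussStep]
    exact add_mem (smul_mem _ p (subset_span (by simp))) (smul_mem _ q (subset_span (by simp)))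
  · exact fun h => hpq (LinearIndependent.pair_iff.mp (hind.restrict_scalars' ℤ) p q h)
end

section
/- Let b_1, b_2 ∈ ℝ² be a basis of a lattice L satisfying the Lagrange–Gauss reduced conditions ‖b_1‖ ≤ ‖b_2‖ and |b_1·b_2| ≤ ‖b_1‖²/2. Then b_1 is a shortest nonzero vector of L. -/
open RealInnerProductSpace

/-!
For a lattice vector `v = m b₁ + n b₂`, expanding `‖v‖²` and using the two reduction conditions
gives `‖v‖² ≥ (m² - |m n| + n²) ‖b₁‖²`, and the integer binary form `m² - |m n| + n²` is at
least `1` unless `m = n = 0`.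
-/

theorem Int.one_le_sq_sub_abs_mul_add_sq {m n : ℤ} (h : ¬(m = 0 ∧ n = 0)) :
    1 ≤ m ^ 2 - |m * n| + n ^ 2 := by
  rcases eq_or_ne m 0 with rfl | hm
  · have hn : 1 ≤ |n| := Int.one_le_abs fun hn => h ⟨rfl, hn⟩
    rw [zero_mul, abs_zero]
    nlinarith [sq_abs n]
  · have hm' : 1 ≤ |m| := Int.one_le_abs hm
    rw [abs_mul, ← sq_abs m, ← sq_abs n]
    nlinarith [abs_nonneg n, sq_nonneg (|m| - |n|)]

section Reduced

variable {E : Type*} [NormedAddCommGroup E] [InnerProductSpace ℝ E] {x y : E}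

theorem mul_norm_sq_le_norm_smul_add_smul_sq (hle : ‖x‖ ≤ ‖y‖)
    (hred : |⟪x, y⟫| ≤ ‖x‖ ^ 2 / 2) (a b : ℝ) :
    (a ^ 2 - |a * b| + b ^ 2) * ‖x‖ ^ 2 ≤ ‖a • x + b • y‖ ^ 2 := by
  have hexp : ‖a • x + b • y‖ ^ 2 = a ^ 2 * ‖x‖ ^ 2 + 2 * (a * b) * ⟪x, y⟫ + b ^ 2 * ‖y‖ ^ 2 := by
    rw [norm_add_sq_real, norm_smul, norm_smul, real_inner_smul_left, real_inner_smul_right,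
      Real.norm_eq_abs, Real.norm_eq_abs, mul_pow, mul_pow, sq_abs, sq_abs]
    ring
  have hcross : -(|a * b| * ‖x‖ ^ 2) ≤ 2 * (a * b) * ⟪x, y⟫ := by
    have := neg_abs_le (a * b * ⟪x, y⟫)
    rw [abs_mul] at this
    nlinarith [mul_le_mul_of_nonneg_left hred (abs_nonneg (a * b))]
  have hy : b ^ 2 * ‖x‖ ^ 2 ≤ b ^ 2 * ‖y‖ ^ 2 := by gcongr
  rw [hexp]
  linarith

theorem norm_le_norm_zsmul_add_zsmul (hle : ‖x‖ ≤ ‖y‖) (hred : |⟪x, y⟫| ≤ ‖x‖ ^ 2 / 2)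
    {m n : ℤ} (hmn : ¬(m = 0 ∧ n = 0)) :
    ‖x‖ ≤ ‖m • x + n • y‖ := by
  have hform : (1 : ℝ) ≤ (m : ℝ) ^ 2 - |(m : ℝ) * n| + (n : ℝ) ^ 2 := by
    exact_mod_cast Int.one_le_sq_sub_abs_mul_add_sq hmn
  have hsq : ‖x‖ ^ 2 ≤ ‖m • x + n • y‖ ^ 2 := by
    rw [← Int.cast_smul_eq_zsmul ℝ m x, ← Int.cast_smul_eq_zsmul ℝ n y]
    calc ‖x‖ ^ 2 ≤ ((m : ℝ) ^ 2 - |(m : ℝ) * n| + (n : ℝ) ^ 2) * ‖x‖ ^ 2 :=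
          le_mul_of_one_le_left (sq_nonneg _) hform
      _ ≤ _ := mul_norm_sq_le_norm_smul_add_smul_sq hle hred _ _
  exact pow_le_pow_iff_left₀ (norm_nonneg _) (norm_nonneg _) two_ne_zero |>.mp hsq

end Reduced

theorem reduced_basis_shortest_general (b₁ b₂ : EuclideanSpace ℝ (Fin 2))
    (hle : ‖b₁‖ ≤ ‖b₂‖) (hred : |⟪b₁, b₂⟫| ≤ ‖b₁‖ ^ 2 / 2) :
    ∀ m n : ℤ, ¬(m = 0 ∧ n = 0) → ‖b₁‖ ≤ ‖m • b₁ + n • b₂‖ :=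
  fun _ _ hmn => norm_le_norm_zsmul_add_zsmul hle hred hmn

/-- A Lagrange–Gauss reduced basis (`‖b₁‖ ≤ ‖b₂‖` and `|b₁·b₂| ≤ ‖b₁‖²/2`) of a
planar lattice has `b₁` a shortest nonzero lattice vector. -/
theorem reduced_basis_shortest (b₁ b₂ : EuclideanSpace ℝ (Fin 2))
    (hind : LinearIndependent ℝ ![b₁, b₂])
    (hle : ‖b₁‖ ≤ ‖b₂‖) (hred : |⟪b₁, b₂⟫| ≤ ‖b₁‖ ^ 2 / 2) :
    ∀ m n : ℤ, ¬(m = 0 ∧ n = 0) → ‖b₁‖ ≤ ‖m • b₁ + n • b₂‖ :=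
  reduced_basis_shortest_general b₁ b₂ hle hred
end

section
/- Let 0 < ε < 1/2 and let m(n) = ⌈log(n)/(2(1/2−ε)²)⌉. A system of ⌊n/m(n)⌋ independent binary clusters, each storing one bit and each failing (flipping its stored bit) with probability at most exp(−2 m(n) (1/2−ε)²), stores k(n) = ⌊n/m(n)⌋ bits with overall failure probability at most 1 − (1 − 1/n)^{k(n)}, which tends to 0; moreover k(n)/n ~ 2(1/2−ε)²/log(n), so the information rate is Θ(1/log n). -/
open Filter Topology Real

/-! With `c = 2(1/2-ε)²` and `m = ⌈log n / c⌉₊` each cluster fails with probability at most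
`exp (-c m) ≤ 1/n`, so by independence all `k` clusters succeed with probability at least
`(1 - 1/n)^k`, and by Bernoulli's inequality the failure probability is at most `k/n`.
Since `m ~ log n / c = o(n)`, the floor in `k = ⌊n/m⌋` is negligible: `k ~ n/m`, hence
`k log n / n ~ log n / m → c`, which in turn forces `k/n → 0`. -/

lemma one_sub_prod_one_sub_le_one_sub_pow {ι : Type*} [Fintype ι] {p : ι → ℝ} {q : ℝ}
    (hq : q ≤ 1) (hpq : ∀ i, p i ≤ q) :
    1 - ∏ i, (1 - p i) ≤ 1 - (1 - q) ^ Fintype.card ι := by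
  have : (1 - q) ^ Fintype.card ι ≤ ∏ i, (1 - p i) := by
    rw [← Finset.card_univ, ← Finset.prod_const]
    exact Finset.prod_le_prod (fun _ _ => by linarith) (fun i _ => by linarith [hpq i])
  linarith

lemma one_sub_one_sub_pow_le_mul {x : ℝ} (hx : x ≤ 2) (k : ℕ) : 1 - (1 - x) ^ k ≤ k * x := by
  have := one_add_mul_le_pow (a := -x) (by linarith) k
  rw [← sub_eq_add_neg] at this
  linarith

lemma Real.exp_neg_le_inv_of_log_le {x t : ℝ} (hx : 0 < x) (h : log x ≤ t) :
    exp (-t) ≤ x⁻¹ := by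
  rw [exp_neg]
  exact inv_anti₀ hx ((log_le_iff_le_exp hx).1 h)

lemma le_mul_natCeil_div {a c : ℝ} (hc : 0 < c) : a ≤ c * ⌈a / c⌉₊ := by
  rw [← div_le_iff₀' hc]
  exact Nat.le_ceil _

lemma tendsto_one_sub_one_sub_pow_zero {α : Type*} {l : Filter α} {x : α → ℝ} {k : α → ℕ}
    (hx0 : ∀ᶠ a in l, 0 ≤ x a) (hx1 : ∀ᶠ a in l, x a ≤ 1)
    (hkx : Tendsto (fun a => k a * x a) l (𝓝 0)) :
    Tendsto (fun a => 1 - (1 - x a) ^ k a) l (𝓝 0) := by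
  refine tendsto_of_tendsto_of_tendsto_of_le_of_le' tendsto_const_nhds hkx ?_ ?_
  · filter_upwards [hx0, hx1] with a h0 h1
    linarith [pow_le_one₀ (n := k a) (sub_nonneg.2 h1) (by linarith)]
  · filter_upwards [hx1] with a h1
    exact one_sub_one_sub_pow_le_mul (by linarith) _

lemma tendsto_div_natCeil_div {α : Type*} {l : Filter α} {f : α → ℝ} {c : ℝ}
    (hf : Tendsto f l atTop) (hc : 0 < c) :
    Tendsto (fun a => f a / ⌈f a / c⌉₊) l (𝓝 c) := by
  have h := (tendsto_nat_ceil_div_atTop.comp (hf.atTop_div_const hc)).inv₀ one_ne_zero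
  convert h.const_mul c using 1
  · ext a
    simp only [Function.comp_apply, inv_div]
    field_simp
  · simp

lemma tendsto_natDiv_div_mul_of_eq_natCeil {f : ℕ → ℝ} {c : ℝ} {m : ℕ → ℕ}
    (hf : Tendsto f atTop atTop) (hfn : Tendsto (fun n : ℕ => f n / n) atTop (𝓝 0)) (hc : 0 < c)
    (hm : ∀ n, m n = ⌈f n / c⌉₊) :
    Tendsto (fun n : ℕ => ((n / m n : ℕ) : ℝ) / n * f n) atTop (𝓝 c) := by
  have hfm : Tendsto (fun n => f n / m n) atTop (𝓝 c) := by
    simpa only [hm] using tendsto_div_natCeil_div hf hc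
  have hf_pos : ∀ᶠ n in atTop, 0 < f n := hf.eventually_gt_atTop 0
  have hm_pos : ∀ᶠ n in atTop, (0 : ℝ) < m n := by
    filter_upwards [hf_pos] with n hn
    exact_mod_cast hm n ▸ Nat.ceil_pos.2 (div_pos hn hc)
  have hmn : Tendsto (fun n : ℕ => (m n : ℝ) / n) atTop (𝓝 0) := by
    have h := (hfm.inv₀ hc.ne').mul hfn
    rw [mul_zero] at h
    refine h.congr' ?_
    filter_upwards [hf_pos] with n hn
    rw [inv_div, div_mul_div_cancel₀ hn.ne']
  have hnm : Tendsto (fun n : ℕ => (n : ℝ) / m n) atTop atTop := by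
    have hmn' : Tendsto (fun n : ℕ => (m n : ℝ) / n) atTop (𝓝[>] 0) := by
      refine tendsto_nhdsWithin_iff.2 ⟨hmn, ?_⟩
      filter_upwards [hm_pos, eventually_gt_atTop 0] with n hm hn
      exact div_pos hm (by exact_mod_cast hn)
    convert hmn'.inv_tendsto_nhdsGT_zero using 1
    ext n
    simp
  have h := (tendsto_nat_floor_div_atTop.comp hnm).mul hfm
  rw [one_mul] at h
  refine h.congr' ?_
  filter_upwards [hm_pos, eventually_gt_atTop 0] with n hm hn
  have hn' : (0 : ℝ) < n := by exact_mod_cast hn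
  simp only [Function.comp_apply, Nat.floor_div_eq_div]
  field_simp

theorem hopfield_info_rate_general (ε : ℝ) (hε : ε < 1/2)
    (m : ℕ → ℕ) (hm : ∀ n : ℕ, m n = ⌈Real.log n / (2 * (1/2 - ε)^2)⌉₊)
    (k : ℕ → ℕ) (hk : ∀ n, k n = n / m n) :
    (∀ n : ℕ, 2 ≤ n → ∀ p : Fin (k n) → ℝ, (∀ i, 0 ≤ p i) →
      (∀ i, p i ≤ Real.exp (-2 * (m n : ℝ) * (1/2 - ε)^2)) →
      1 - ∏ i, (1 - p i) ≤ 1 - (1 - 1 / (n : ℝ)) ^ (k n)) ∧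
    Tendsto (fun n : ℕ => 1 - (1 - 1 / (n : ℝ)) ^ (k n)) atTop (nhds 0) ∧
    Tendsto (fun n : ℕ => (k n : ℝ) / n * Real.log n) atTop (nhds (2 * (1/2 - ε)^2)) := by
  set c : ℝ := 2 * (1/2 - ε)^2
  have hc : 0 < c := by
    have := sub_pos.2 hε
    positivity
  have hlog : Tendsto (fun n : ℕ => log n) atTop atTop :=
    tendsto_log_atTop.comp tendsto_natCast_atTop_atTop
  have hrate : Tendsto (fun n : ℕ => (k n : ℝ) / n * log n) atTop (𝓝 c) := by
    simpa only [hk] using tendsto_natDiv_div_mul_of_eq_natCeil hlog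
      (isLittleO_log_id_atTop.tendsto_div_nhds_zero.comp tendsto_natCast_atTop_atTop) hc hm
  have hkn : Tendsto (fun n : ℕ => (k n : ℝ) * (1 / n)) atTop (𝓝 0) := by
    have h := hrate.mul (tendsto_inv_atTop_zero.comp hlog)
    rw [mul_zero] at h
    refine h.congr' ?_
    filter_upwards [hlog.eventually_gt_atTop 0] with n hn
    simp only [Function.comp_apply]
    field_simp
  refine ⟨fun n hn p _ hp => ?_, ?_, hrate⟩
  · have hn' : (1 : ℝ) < n := by exact_mod_cast hn
    have hexp : exp (-2 * (m n : ℝ) * (1/2 - ε)^2) ≤ 1 / n := by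
      rw [show -2 * (m n : ℝ) * (1/2 - ε)^2 = -(c * m n) by ring, one_div]
      exact exp_neg_le_inv_of_log_le (by linarith) (hm n ▸ le_mul_natCeil_div hc)
    simpa using one_sub_prod_one_sub_le_one_sub_pow
      ((div_le_one (by linarith)).2 hn'.le) (fun i => (hp i).trans hexp)
  · refine tendsto_one_sub_one_sub_pow_zero (Eventually.of_forall fun n => by positivity) ?_ hkn
    filter_upwards [eventually_ge_atTop 1] with n hn
    exact div_le_one_of_le₀ (by exact_mod_cast hn) (by positivity)

/-- Quantitative content of Theorem 1: with cluster size `m(n) = ⌈log n/(2(1/2-ε)²)⌉`,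
a system of `k(n) = ⌊n/m(n)⌋` independent clusters each failing with probability at
most `exp(-2 m(n) (1/2-ε)²)` has overall failure probability at most
`1 - (1-1/n)^{k(n)}`, which tends to `0`; moreover `k(n)/n ~ 2(1/2-ε)²/log n`,
so the information rate is `Θ(1/log n)`. -/
theorem hopfield_info_rate (ε : ℝ) (hε0 : 0 < ε) (hε : ε < 1/2)
    (m : ℕ → ℕ) (hm : ∀ n : ℕ, m n = ⌈Real.log n / (2 * (1/2 - ε)^2)⌉₊)
    (k : ℕ → ℕ) (hk : ∀ n, k n = n / m n) :
    (∀ n : ℕ, 2 ≤ n → ∀ p : Fin (k n) → ℝ, (∀ i, 0 ≤ p i) →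
      (∀ i, p i ≤ Real.exp (-2 * (m n : ℝ) * (1/2 - ε)^2)) →
      1 - ∏ i, (1 - p i) ≤ 1 - (1 - 1 / (n : ℝ)) ^ (k n)) ∧
    Tendsto (fun n : ℕ => 1 - (1 - 1 / (n : ℝ)) ^ (k n)) atTop (nhds 0) ∧
    Tendsto (fun n : ℕ => (k n : ℝ) / n * Real.log n) atTop (nhds (2 * (1/2 - ε)^2)) :=
  hopfield_info_rate_general ε hε m hm k hk
end
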